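/- arXiv:2205.12856 — 7 statements merged into one kernel-verified Lean document; each statement's English description precedes it below -/
import Mathlib

section
/- Let F : ℝ^d → ℝ be twice differentiable with L₂-Lipschitz Hessian, and suppose Δ satisfies the first-order optimality condition g + HΔ + (M/2)‖Δ‖Δ = 0 for vectors g ∈ ℝ^d and a symmetric matrix H. Then for any x, ‖∇F(x+Δ)‖ ≤ ((M+L₂)/2)‖Δ‖² + ‖∇F(x) − g‖ + ‖∇²F(x) − H‖·‖Δ‖. -/
/-!
Write `∇F(x + Δ)` as the first-order Taylor remainder of `∇F` at `x`, plus `∇F(x) - g`,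
plus `(∇²F(x) - H) Δ`, plus `g + H Δ`. The remainder is at most `(L₂/2)‖Δ‖²` because the Hessian
is `L₂`-Lipschitz, and the optimality condition gives `‖g + H Δ‖ = (M/2)‖Δ‖²`.
-/

open RealInnerProductSpace Set

theorem norm_sub_sub_fderiv_le_of_lipschitz_fderiv
    {E F : Type*} [NormedAddCommGroup E] [NormedSpace ℝ E]
    [NormedAddCommGroup F] [NormedSpace ℝ F]
    {f : E → F} {f' : E → E →L[ℝ] F} {L : ℝ}
    (hf : ∀ x, HasFDerivAt f (f' x) x) (hlip : ∀ x y, ‖f' x - f' y‖ ≤ L * ‖x - y‖)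
    (x Δ : E) :
    ‖f (x + Δ) - f x - f' x Δ‖ ≤ L / 2 * ‖Δ‖ ^ 2 := by
  -- `‖φ‖` is fenced by `t ↦ L/2 ‖Δ‖² t²`, which has the same value `0` at `t = 0`.
  set φ : ℝ → F := fun t => f (x + t • Δ) - f x - t • f' x Δ
  have hφ : ∀ t, HasDerivAt φ (f' (x + t • Δ) Δ - f' x Δ) t := by
    intro t
    have hline : HasDerivAt (fun t : ℝ => x + t • Δ) Δ t := by
      simpa using ((hasDerivAt_id t).smul_const Δ).const_add x
    have h := (((hf _).comp_hasDerivAt t hline).sub_const (f x)).sub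
      ((hasDerivAt_id t).smul_const (f' x Δ))
    rwa [one_smul] at h
  have hB : ∀ t, HasDerivAt (fun t => L / 2 * ‖Δ‖ ^ 2 * t ^ 2) (L * ‖Δ‖ ^ 2 * t) t := fun t =>
    ((hasDerivAt_pow 2 t).const_mul (L / 2 * ‖Δ‖ ^ 2)).congr_deriv (by norm_num; ring)
  have hbound : ∀ t ∈ Ico (0 : ℝ) 1, ‖f' (x + t • Δ) Δ - f' x Δ‖ ≤ L * ‖Δ‖ ^ 2 * t := by
    intro t ht
    calc ‖f' (x + t • Δ) Δ - f' x Δ‖ ≤ ‖f' (x + t • Δ) - f' x‖ * ‖Δ‖ :=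
          (f' (x + t • Δ) - f' x).le_opNorm Δ
      _ ≤ L * ‖t • Δ‖ * ‖Δ‖ := by
          gcongr
          simpa using hlip (x + t • Δ) x
      _ = L * ‖Δ‖ ^ 2 * t := by
          rw [norm_smul, Real.norm_of_nonneg ht.1]
          ring
  have key := image_norm_le_of_norm_deriv_right_le_deriv_boundary
    (fun t _ => (hφ t).continuousAt.continuousWithinAt) (fun t _ => (hφ t).hasDerivWithinAt)
    (by simp [φ]) hB hbound (right_mem_Icc.2 zero_le_one)
  simpa [φ] using key

theorem norm_eq_of_add_smul_norm_smul_eq_zero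
    {E : Type*} [NormedAddCommGroup E] [NormedSpace ℝ E] {v Δ : E} {c : ℝ} (hc : 0 ≤ c)
    (h : v + c • (‖Δ‖ • Δ) = 0) :
    ‖v‖ = c * ‖Δ‖ ^ 2 := by
  rw [eq_neg_of_add_eq_zero_left h, norm_neg, norm_smul, norm_smul, norm_norm,
    Real.norm_of_nonneg hc]
  ring

theorem stmt_4_general (d : ℕ)
    (gradF : EuclideanSpace ℝ (Fin d) → EuclideanSpace ℝ (Fin d))
    (hessF : EuclideanSpace ℝ (Fin d) → EuclideanSpace ℝ (Fin d) →L[ℝ] EuclideanSpace ℝ (Fin d))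
    (L₂ M : ℝ) (hM : 0 < M)
    (hhess : ∀ x, HasFDerivAt gradF (hessF x) x)
    (hlip : ∀ x y, ‖hessF x - hessF y‖ ≤ L₂ * ‖x - y‖)
    (g : EuclideanSpace ℝ (Fin d))
    (H : EuclideanSpace ℝ (Fin d) →L[ℝ] EuclideanSpace ℝ (Fin d))
    (Δ : EuclideanSpace ℝ (Fin d))
    (hopt : g + H Δ + (M / 2) • (‖Δ‖ • Δ) = 0)
    (x : EuclideanSpace ℝ (Fin d)) :
    ‖gradF (x + Δ)‖ ≤
      (M + L₂) / 2 * ‖Δ‖ ^ 2 + ‖gradF x - g‖ + ‖hessF x - H‖ * ‖Δ‖ := by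
  have htaylor := norm_sub_sub_fderiv_le_of_lipschitz_fderiv hhess hlip x Δ
  have hmodel := norm_eq_of_add_smul_norm_smul_eq_zero (by positivity) hopt
  have hdecomp : gradF (x + Δ) = (gradF (x + Δ) - gradF x - hessF x Δ) + (gradF x - g)
      + (hessF x - H) Δ + (g + H Δ) := by
    rw [sub_apply]
    abel
  calc ‖gradF (x + Δ)‖
      ≤ ‖gradF (x + Δ) - gradF x - hessF x Δ‖ + ‖gradF x - g‖ + ‖(hessF x - H) Δ‖
          + ‖g + H Δ‖ := (congrArg norm hdecomp).trans_le (norm_add₄_le ..)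
    _ ≤ L₂ / 2 * ‖Δ‖ ^ 2 + ‖gradF x - g‖ + ‖hessF x - H‖ * ‖Δ‖ + M / 2 * ‖Δ‖ ^ 2 := by
        gcongr
        · exact (hessF x - H).le_opNorm Δ
        · exact hmodel.le
    _ = (M + L₂) / 2 * ‖Δ‖ ^ 2 + ‖gradF x - g‖ + ‖hessF x - H‖ * ‖Δ‖ := by ring

theorem stmt_4 (d : ℕ)
    (F : EuclideanSpace ℝ (Fin d) → ℝ)
    (gradF : EuclideanSpace ℝ (Fin d) → EuclideanSpace ℝ (Fin d))
    (hessF : EuclideanSpace ℝ (Fin d) → EuclideanSpace ℝ (Fin d) →L[ℝ] EuclideanSpace ℝ (Fin d))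
    (L₂ M : ℝ) (hL₂ : 0 ≤ L₂) (hM : 0 < M)
    (hgrad : ∀ x, HasGradientAt F (gradF x) x)
    (hhess : ∀ x, HasFDerivAt gradF (hessF x) x)
    (hlip : ∀ x y, ‖hessF x - hessF y‖ ≤ L₂ * ‖x - y‖)
    (g : EuclideanSpace ℝ (Fin d))
    (H : EuclideanSpace ℝ (Fin d) →L[ℝ] EuclideanSpace ℝ (Fin d))
    (hsymm : ∀ u w, ⟪H u, w⟫ = ⟪u, H w⟫)
    (Δ : EuclideanSpace ℝ (Fin d))
    (hopt : g + H Δ + (M / 2) • (‖Δ‖ • Δ) = 0)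
    (x : EuclideanSpace ℝ (Fin d)) :
    ‖gradF (x + Δ)‖ ≤
      (M + L₂) / 2 * ‖Δ‖ ^ 2 + ‖gradF x - g‖ + ‖hessF x - H‖ * ‖Δ‖ :=
  stmt_4_general d gradF hessF L₂ M hM hhess hlip g H Δ hopt x
end

section
/- Let F : ℝ^d → ℝ be twice differentiable with L₂-Lipschitz Hessian. Suppose Δ is a global minimizer of the cubic model m(Δ) = ⟨g,Δ⟩ + (1/2)⟨Δ, HΔ⟩ + (M/6)‖Δ‖³, so that gᵀΔ + ΔᵀHΔ + (M/2)‖Δ‖³ = 0 and gᵀΔ ≤ 0. Then ((3M − 2L₂ − 8)/12)·‖Δ‖³ ≤ F(x) − F(x+Δ) + (2/3)‖∇F(x) − g‖^{3/2} + (1/6)‖∇²F(x) − H‖³. -/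
/-!
The Lipschitz Hessian gives the cubic upper bound
`F (x + Δ) ≤ F x + ⟪∇F x, Δ⟫ + ½⟪∇²F x Δ, Δ⟫ + (L₂/6)‖Δ‖³`.
Replacing `∇F x, ∇²F x` by `g, H` costs `⟪∇F x - g, Δ⟫ + ½⟪(∇²F x - H) Δ, Δ⟫`, which Young's
inequality with exponents `3/2` and `3` splits into the two error terms plus multiples of `‖Δ‖³`.
Finally the stationarity identity gives `⟪g, Δ⟫ + ½⟪Δ, H Δ⟫ = ½⟪g, Δ⟫ - (M/4)‖Δ‖³ ≤ -(M/4)‖Δ‖³`.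
-/

open RealInnerProductSpace Set

theorem le_taylor_add_of_deriv_sub_le {φ G Q : ℝ → ℝ} {K : ℝ}
    (hφ : ∀ t, HasDerivAt φ (G t) t) (hG : ∀ t, HasDerivAt G (Q t) t)
    (hQ : ∀ t ∈ Ico (0 : ℝ) 1, Q t ≤ Q 0 + K * t) :
    φ 1 ≤ φ 0 + G 0 + Q 0 / 2 + K / 6 := by
  have hG_le : ∀ t ∈ Icc (0 : ℝ) 1, G t ≤ G 0 + Q 0 * t + K / 2 * t ^ 2 := by
    refine image_le_of_deriv_right_le_deriv_boundary
      (fun t _ => (hG t).continuousAt.continuousWithinAt)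
      (fun t _ => (hG t).hasDerivWithinAt) (by simp) (by fun_prop)
      (fun t _ => ?_) hQ
    refine (((((hasDerivAt_id' t).const_mul (Q 0)).const_add (G 0)).add
      ((hasDerivAt_pow 2 t).const_mul (K / 2))).congr_deriv ?_).hasDerivWithinAt
    push_cast
    ring
  have hφ_le : ∀ t ∈ Icc (0 : ℝ) 1,
      φ t ≤ φ 0 + G 0 * t + Q 0 / 2 * t ^ 2 + K / 6 * t ^ 3 := by
    refine image_le_of_deriv_right_le_deriv_boundary
      (fun t _ => (hφ t).continuousAt.continuousWithinAt)
      (fun t _ => (hφ t).hasDerivWithinAt) (by simp) (by fun_prop)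
      (fun t _ => ?_) (fun t ht => hG_le t (Ico_subset_Icc_self ht))
    refine ((((((hasDerivAt_id' t).const_mul (G 0)).const_add (φ 0)).add
      ((hasDerivAt_pow 2 t).const_mul (Q 0 / 2))).add
      ((hasDerivAt_pow 3 t).const_mul (K / 6))).congr_deriv ?_).hasDerivWithinAt
    push_cast
    ring
  simpa using hφ_le 1 (right_mem_Icc.2 zero_le_one)

section InnerProductSpace

variable {E : Type*} [NormedAddCommGroup E] [InnerProductSpace ℝ E]

theorem inner_apply_self_le_opNorm_mul_sq (A : E →L[ℝ] E) (v : E) :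
    ⟪A v, v⟫ ≤ ‖A‖ * ‖v‖ ^ 2 :=
  calc ⟪A v, v⟫ ≤ ‖A v‖ * ‖v‖ := real_inner_le_norm _ _
    _ ≤ ‖A‖ * ‖v‖ * ‖v‖ := by gcongr; exact A.le_opNorm v
    _ = ‖A‖ * ‖v‖ ^ 2 := by ring

variable [CompleteSpace E]

theorem le_add_inner_gradient_add_hessian_add_cube {F : E → ℝ} {gradF : E → E}
    {hessF : E → E →L[ℝ] E} {L : ℝ} (hgrad : ∀ x, HasGradientAt F (gradF x) x)
    (hhess : ∀ x, HasFDerivAt gradF (hessF x) x)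
    (hlip : ∀ x y, ‖hessF x - hessF y‖ ≤ L * ‖x - y‖) (x Δ : E) :
    F (x + Δ) ≤ F x + ⟪gradF x, Δ⟫ + ⟪hessF x Δ, Δ⟫ / 2 + L / 6 * ‖Δ‖ ^ 3 := by
  set c : ℝ → E := fun t => x + t • Δ
  have hc : ∀ t, HasDerivAt c Δ t := fun t => by
    simpa [c] using ((hasDerivAt_id t).smul_const Δ).const_add x
  have hφ : ∀ t, HasDerivAt (fun t => F (c t)) ⟪gradF (c t), Δ⟫ t := fun t => by
    simpa [InnerProductSpace.toDual_apply_apply, Function.comp_def] using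
      (hgrad (c t)).hasFDerivAt.comp_hasDerivAt t (hc t)
  have hG : ∀ t, HasDerivAt (fun t => ⟪gradF (c t), Δ⟫) ⟪hessF (c t) Δ, Δ⟫ t := fun t => by
    simpa using ((hhess (c t)).comp_hasDerivAt t (hc t)).inner ℝ (hasDerivAt_const t Δ)
  have hQ : ∀ t ∈ Ico (0 : ℝ) 1,
      ⟪hessF (c t) Δ, Δ⟫ ≤ ⟪hessF (c 0) Δ, Δ⟫ + L * ‖Δ‖ ^ 3 * t := by
    intro t ht
    have hdist : ‖c t - c 0‖ = t * ‖Δ‖ := by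
      simp [c, norm_smul, abs_of_nonneg ht.1]
    have hquad := inner_apply_self_le_opNorm_mul_sq (hessF (c t) - hessF (c 0)) Δ
    rw [sub_apply, inner_sub_left] at hquad
    have hlip_t := hlip (c t) (c 0)
    rw [hdist] at hlip_t
    nlinarith [mul_le_mul_of_nonneg_right hlip_t (sq_nonneg ‖Δ‖)]
  have taylor := le_taylor_add_of_deriv_sub_le hφ hG hQ
  simp only [c, zero_smul, add_zero, one_smul] at taylor
  linarith

end InnerProductSpace

theorem mul_le_rpow_three_halves_add_cube {a b : ℝ} (ha : 0 ≤ a) (hb : 0 ≤ b) :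
    a * b ≤ 2 / 3 * a ^ ((3 : ℝ) / 2) + b ^ 3 / 3 := by
  have := Real.young_inequality_of_nonneg ha hb
    (⟨by norm_num, by norm_num, by norm_num⟩ : Real.HolderConjugate (3 / 2) 3)
  rw [show (3 : ℝ) = (3 : ℕ) by norm_num, Real.rpow_natCast] at this
  push_cast at this
  linarith

theorem mul_sq_le_cube_add_cube {a b : ℝ} (ha : 0 ≤ a) (hb : 0 ≤ b) :
    a * b ^ 2 ≤ a ^ 3 / 3 + 2 / 3 * b ^ 3 := by
  -- `a³ + 2b³ - 3ab² = (a - b)²(a + 2b)`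
  nlinarith [mul_nonneg (sq_nonneg (a - b)) (add_nonneg ha (mul_nonneg zero_le_two hb))]

theorem stmt_5_general (d : ℕ)
    (F : EuclideanSpace ℝ (Fin d) → ℝ)
    (gradF : EuclideanSpace ℝ (Fin d) → EuclideanSpace ℝ (Fin d))
    (hessF : EuclideanSpace ℝ (Fin d) → EuclideanSpace ℝ (Fin d) →L[ℝ] EuclideanSpace ℝ (Fin d))
    (L₂ M : ℝ)
    (hgrad : ∀ x, HasGradientAt F (gradF x) x)
    (hhess : ∀ x, HasFDerivAt gradF (hessF x) x)
    (hlip : ∀ x y, ‖hessF x - hessF y‖ ≤ L₂ * ‖x - y‖)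
    (g : EuclideanSpace ℝ (Fin d))
    (H : EuclideanSpace ℝ (Fin d) →L[ℝ] EuclideanSpace ℝ (Fin d))
    (Δ : EuclideanSpace ℝ (Fin d))
    (heq : ⟪g, Δ⟫ + ⟪Δ, H Δ⟫ + (M / 2) * ‖Δ‖ ^ 3 = 0)
    (hgΔ : ⟪g, Δ⟫ ≤ 0)
    (x : EuclideanSpace ℝ (Fin d)) :
    (3 * M - 2 * L₂ - 8) / 12 * ‖Δ‖ ^ 3 ≤
      F x - F (x + Δ) + 2 / 3 * ‖gradF x - g‖ ^ ((3 : ℝ) / 2)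
        + 1 / 6 * ‖hessF x - H‖ ^ 3 := by
  have taylor := le_add_inner_gradient_add_hessian_add_cube hgrad hhess hlip x Δ
  have grad_err := (real_inner_le_norm (gradF x - g) Δ).trans
    (mul_le_rpow_three_halves_add_cube (norm_nonneg _) (norm_nonneg Δ))
  have hess_err := (inner_apply_self_le_opNorm_mul_sq (hessF x - H) Δ).trans
    (mul_sq_le_cube_add_cube (norm_nonneg _) (norm_nonneg Δ))
  have grad_split : ⟪gradF x, Δ⟫ = ⟪g, Δ⟫ + ⟪gradF x - g, Δ⟫ := by
    rw [inner_sub_left]; ring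
  have hess_split : ⟪hessF x Δ, Δ⟫ = ⟪Δ, H Δ⟫ + ⟪(hessF x - H) Δ, Δ⟫ := by
    rw [sub_apply, inner_sub_left, real_inner_comm (H Δ) Δ]; ring
  linarith

theorem stmt_5 (d : ℕ)
    (F : EuclideanSpace ℝ (Fin d) → ℝ)
    (gradF : EuclideanSpace ℝ (Fin d) → EuclideanSpace ℝ (Fin d))
    (hessF : EuclideanSpace ℝ (Fin d) → EuclideanSpace ℝ (Fin d) →L[ℝ] EuclideanSpace ℝ (Fin d))
    (L₂ M : ℝ) (hL₂ : 0 ≤ L₂) (hM : 0 < M)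
    (hgrad : ∀ x, HasGradientAt F (gradF x) x)
    (hhess : ∀ x, HasFDerivAt gradF (hessF x) x)
    (hlip : ∀ x y, ‖hessF x - hessF y‖ ≤ L₂ * ‖x - y‖)
    (g : EuclideanSpace ℝ (Fin d))
    (H : EuclideanSpace ℝ (Fin d) →L[ℝ] EuclideanSpace ℝ (Fin d))
    (hsymm : ∀ u w, ⟪H u, w⟫ = ⟪u, H w⟫)
    (Δ : EuclideanSpace ℝ (Fin d))
    (heq : ⟪g, Δ⟫ + ⟪Δ, H Δ⟫ + (M / 2) * ‖Δ‖ ^ 3 = 0)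
    (hgΔ : ⟪g, Δ⟫ ≤ 0)
    (x : EuclideanSpace ℝ (Fin d)) :
    (3 * M - 2 * L₂ - 8) / 12 * ‖Δ‖ ^ 3 ≤
      F x - F (x + Δ) + 2 / 3 * ‖gradF x - g‖ ^ ((3 : ℝ) / 2)
        + 1 / 6 * ‖hessF x - H‖ ^ 3 :=
  stmt_5_general d F gradF hessF L₂ M hgrad hhess hlip g H Δ heq hgΔ x
end

section
/- Suppose F : ℝ^d → ℝ is twice differentiable with L₂-Lipschitz Hessian and satisfies the gradient dominance property F(x) − F(x*) ≤ τ_F ‖∇F(x)‖^α for all x, where x* is a global minimizer and α ≥ 1. If Δ is a global minimizer of the cubic model with gradient estimate g and Hessian estimate H, then there exist explicit constants C, C_g, C_H > 0 (depending only on M, L₂, τ_F, α) such that F(x+Δ) − F(x*) ≤ C·(F(x) − F(x+Δ))^{2α/3} + C_g·‖∇F(x) − g‖^α + C_H·‖∇²F(x) − H‖^{2α}. -/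
/-! A global minimizer `Δ` of the cubic model is stationary, `g + H Δ + (M / 2) ‖Δ‖ Δ = 0`, and
satisfies `cubicModel g H M Δ ≤ -(M / 12) ‖Δ‖³`. Together with the Taylor estimates for an
`L₂`-Lipschitz Hessian this gives, with `r = ‖Δ‖`, `δg = ‖∇F x - g‖`, `δH = ‖∇²F x - H‖`,
* the decrease `F x - F (x + Δ) ≥ r³ / 3 - 2 δg^(3/2) - 2 δH³` (Young's inequality), and
* the gradient bound `‖∇F (x + Δ)‖ ≤ K (r² + δg + δH²)` with `K = (L₂ + M + 1) / 2`.
Gradient dominance turns the second into a bound on `F (x + Δ) - F x*` by `(r²)^α = (r³)^(2α/3)`,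
and the first bounds `r³` by the decrease and the error terms. -/

open RealInnerProductSpace

lemma add_rpow_le_two_rpow_mul {a b p : ℝ} (ha : 0 ≤ a) (hb : 0 ≤ b) (hp : 0 ≤ p) :
    (a + b) ^ p ≤ 2 ^ p * (a ^ p + b ^ p) := by
  calc (a + b) ^ p ≤ (2 * max a b) ^ p := by gcongr; linarith [le_max_left a b, le_max_right a b]
    _ = 2 ^ p * max (a ^ p) (b ^ p) := by
        rw [Real.mul_rpow zero_le_two (ha.trans (le_max_left a b)), Real.rpow_max ha hb hp]
    _ ≤ 2 ^ p * (a ^ p + b ^ p) := by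
        gcongr
        exact max_le_add_of_nonneg (by positivity) (by positivity)

lemma add_add_rpow_le_three_rpow_mul {a b c p : ℝ} (ha : 0 ≤ a) (hb : 0 ≤ b) (hc : 0 ≤ c)
    (hp : 0 ≤ p) : (a + b + c) ^ p ≤ 3 ^ p * (a ^ p + b ^ p + c ^ p) := by
  have hbc : 0 ≤ max b c := hb.trans (le_max_left b c)
  calc (a + b + c) ^ p ≤ (3 * max a (max b c)) ^ p := by
        gcongr
        linarith [le_max_left a (max b c), le_max_right a (max b c), le_max_left b c,
          le_max_right b c]
    _ = 3 ^ p * max (a ^ p) (max (b ^ p) (c ^ p)) := by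
        rw [Real.mul_rpow zero_le_three (ha.trans (le_max_left _ _)), Real.rpow_max ha hbc hp,
          Real.rpow_max hb hc hp]
    _ ≤ 3 ^ p * (a ^ p + b ^ p + c ^ p) := by
        have := Real.rpow_nonneg ha p
        have := Real.rpow_nonneg hb p
        have := Real.rpow_nonneg hc p
        gcongr
        apply max_le <;> [linarith; apply max_le] <;> linarith

/-- For `D < 0` the real power `D ^ p` is only bounded below by `-|D| ^ p`; the extra `e ^ p`
absorbs it. -/
lemma rpow_le_of_le_mul_add {u c D e p : ℝ} (hu : 0 ≤ u) (hc : 0 < c) (he : 0 ≤ e) (hp : 0 ≤ p)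
    (h : u ≤ c * (D + e)) : u ^ p ≤ (2 * c) ^ p * (D ^ p + 2 * e ^ p) := by
  have hep : 0 ≤ e ^ p := Real.rpow_nonneg he p
  have hcp : 0 ≤ c ^ p := Real.rpow_nonneg hc.le p
  have h2p : 1 ≤ (2 : ℝ) ^ p := Real.one_le_rpow one_le_two hp
  rw [Real.mul_rpow zero_le_two hc.le]
  rcases le_or_gt 0 D with hD | hD
  · calc u ^ p ≤ (c * (D + e)) ^ p := by gcongr
      _ = c ^ p * (D + e) ^ p := Real.mul_rpow hc.le (by positivity)
      _ ≤ c ^ p * (2 ^ p * (D ^ p + e ^ p)) := by gcongr; exact add_rpow_le_two_rpow_mul hD he hp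
      _ ≤ 2 ^ p * c ^ p * (D ^ p + 2 * e ^ p) := by nlinarith [mul_nonneg hcp hep]
  · have hDe : -D ≤ e := by nlinarith
    have hDp : -e ^ p ≤ D ^ p := by
      have := abs_le.1 (Real.abs_rpow_le_abs_rpow D p)
      have : |D| ^ p ≤ e ^ p := by gcongr; rwa [abs_of_neg hD]
      linarith
    calc u ^ p ≤ (c * e) ^ p := by gcongr; nlinarith
      _ = 1 * c ^ p * e ^ p := by rw [Real.mul_rpow hc.le he]; ring
      _ ≤ 2 ^ p * c ^ p * (D ^ p + 2 * e ^ p) := by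
        have : 0 ≤ c ^ p * e ^ p := mul_nonneg hcp hep
        nlinarith [mul_le_mul_of_nonneg_left hDp (mul_nonneg (by positivity : (0:ℝ) ≤ 2 ^ p) hcp)]

lemma mul_le_cube_div_six_add_rpow {r a : ℝ} (hr : 0 ≤ r) (ha : 0 ≤ a) :
    a * r ≤ r ^ 3 / 6 + 2 * a ^ ((3 : ℝ) / 2) := by
  obtain ⟨s, hs, rfl⟩ : ∃ s, 0 ≤ s ∧ a = s ^ 2 := ⟨√a, Real.sqrt_nonneg a, (Real.sq_sqrt ha).symm⟩
  rw [← Real.rpow_natCast, ← Real.rpow_mul hs]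
  norm_num
  nlinarith [mul_nonneg hr (sq_nonneg (r - 2 * s)), mul_nonneg hs (sq_nonneg (r - 2 * s)),
    mul_nonneg hs (sq_nonneg (r - s)), pow_nonneg hs 3]

lemma half_mul_sq_le_cube_div_six_add {r h : ℝ} (hr : 0 ≤ r) (hh : 0 ≤ h) :
    1 / 2 * h * r ^ 2 ≤ r ^ 3 / 6 + 2 * h ^ 3 := by
  nlinarith [mul_nonneg (add_nonneg hr hh) (sq_nonneg (r - 2 * h)), pow_nonneg hh 3]

lemma cube_le_of_cubic_descent {r a h D L M : ℝ} (hr : 0 ≤ r) (ha : 0 ≤ a) (hh : 0 ≤ h)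
    (hLM : 2 * L + 8 ≤ 3 * M)
    (hdesc : (M / 4 - L / 6) * r ^ 3 ≤ D + a * r + 1 / 2 * h * r ^ 2) :
    r ^ 3 ≤ 3 * (D + 2 * (a ^ ((3 : ℝ) / 2) + h ^ 3)) := by
  have := mul_le_cube_div_six_add_rpow hr ha
  have := half_mul_sq_le_cube_div_six_add hr hh
  nlinarith [pow_nonneg hr 3]

lemma rpow_add_add_le_of_cube_le {r a h D α : ℝ} (hr : 0 ≤ r) (ha : 0 ≤ a) (hh : 0 ≤ h)
    (hα : 0 ≤ α) (hcube : r ^ 3 ≤ 3 * (D + 2 * (a ^ ((3 : ℝ) / 2) + h ^ 3))) :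
    (r ^ 2 + a + h ^ 2) ^ α ≤
      3 ^ α * (6 ^ (2 * α / 3) * D ^ (2 * α / 3) +
        (1 + 2 * 24 ^ (2 * α / 3)) * (a ^ α + h ^ (2 * α))) := by
  set β := 2 * α / 3 with hβ_def
  have hβ : 0 ≤ β := by positivity
  have hr2 : (r ^ 2) ^ α = (r ^ 3) ^ β := by
    rw [← Real.rpow_natCast, ← Real.rpow_natCast r 3, ← Real.rpow_mul hr, ← Real.rpow_mul hr,
      hβ_def]
    ring_nf
  have hh2 : (h ^ 2) ^ α = h ^ (2 * α) := by
    rw [← Real.rpow_natCast, ← Real.rpow_mul hh]; norm_num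
  have ha32 : (a ^ ((3 : ℝ) / 2)) ^ β = a ^ α := by
    rw [← Real.rpow_mul ha, hβ_def]; ring_nf
  have hh3 : (h ^ 3) ^ β = h ^ (2 * α) := by
    rw [← Real.rpow_natCast, ← Real.rpow_mul hh, hβ_def]; ring_nf
  have he : (2 * (a ^ ((3 : ℝ) / 2) + h ^ 3)) ^ β ≤ 4 ^ β * (a ^ α + h ^ (2 * α)) := by
    rw [Real.mul_rpow zero_le_two (by positivity), ← ha32, ← hh3,
      show (4 : ℝ) = 2 * 2 by norm_num, Real.mul_rpow zero_le_two zero_le_two, mul_assoc]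
    gcongr
    exact add_rpow_le_two_rpow_mul (by positivity) (by positivity) hβ
  have hr3 := rpow_le_of_le_mul_add (pow_nonneg hr 3) three_pos (by positivity) hβ hcube
  rw [show (2 : ℝ) * 3 = 6 by norm_num] at hr3
  calc (r ^ 2 + a + h ^ 2) ^ α ≤ 3 ^ α * ((r ^ 2) ^ α + a ^ α + (h ^ 2) ^ α) :=
        add_add_rpow_le_three_rpow_mul (by positivity) ha (by positivity) hα
    _ ≤ 3 ^ α * (6 ^ β * (D ^ β + 2 * (4 ^ β * (a ^ α + h ^ (2 * α))))
          + a ^ α + h ^ (2 * α)) := by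
        rw [hr2, hh2]
        gcongr
        exact hr3.trans (by gcongr)
    _ = _ := by
        rw [show (24 : ℝ) = 6 * 4 by norm_num, Real.mul_rpow (by norm_num) (by norm_num)]
        ring

section Normed

variable {E F : Type*} [NormedAddCommGroup E] [NormedSpace ℝ E] [NormedAddCommGroup F]
  [NormedSpace ℝ F]

lemma norm_add_sub_sub_fderiv_le_of_lipschitz {f : E → F} {f' : E → E →L[ℝ] F} {L : ℝ}
    (hf : ∀ y, HasFDerivAt f (f' y) y) (hlip : ∀ y z, ‖f' y - f' z‖ ≤ L * ‖y - z‖) (x Δ : E) :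
    ‖f (x + Δ) - f x - f' x Δ‖ ≤ L / 2 * ‖Δ‖ ^ 2 := by
  have hline (t : ℝ) : HasDerivAt (fun s : ℝ => x + s • Δ) Δ t := by
    simpa using ((hasDerivAt_id t).smul_const Δ).const_add x
  have hderiv (t : ℝ) : HasDerivAt (fun s : ℝ => f (x + s • Δ) - f x - s • f' x Δ)
      (f' (x + t • Δ) Δ - f' x Δ) t :=
    ((((hf _).comp_hasDerivAt t (hline t)).sub_const (f x)).sub
      ((hasDerivAt_id t).smul_const (f' x Δ))).congr_deriv (by simp)
  have hbound (t : ℝ) : HasDerivAt (fun s : ℝ => L / 2 * s ^ 2 * ‖Δ‖ ^ 2) (L * t * ‖Δ‖ ^ 2) t :=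
    (((hasDerivAt_pow 2 t).const_mul (L / 2)).mul_const (‖Δ‖ ^ 2)).congr_deriv (by ring)
  have key := image_norm_le_of_norm_deriv_right_le_deriv_boundary
    (fun t _ => (hderiv t).continuousAt.continuousWithinAt) (fun t _ => (hderiv t).hasDerivWithinAt)
    (by simp) hbound (a := 0) (b := 1) (fun t ht => ?_) (Set.right_mem_Icc.2 zero_le_one)
  · simpa using key
  calc ‖f' (x + t • Δ) Δ - f' x Δ‖ ≤ ‖f' (x + t • Δ) - f' x‖ * ‖Δ‖ :=
        (f' (x + t • Δ) - f' x).le_opNorm Δ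
    _ ≤ L * ‖t • Δ‖ * ‖Δ‖ := by gcongr; simpa using hlip (x + t • Δ) x
    _ = L * t * ‖Δ‖ ^ 2 := by rw [norm_smul, Real.norm_of_nonneg ht.1]; ring

lemma norm_add_le_of_cubic_stationary {f : E → E} {f' : E → E →L[ℝ] E} {L M : ℝ}
    {g Δ : E} {H : E →L[ℝ] E}
    (hf : ∀ y, HasFDerivAt f (f' y) y) (hlip : ∀ y z, ‖f' y - f' z‖ ≤ L * ‖y - z‖) (hM : 0 ≤ M)
    (hstat : g + H Δ + (M / 2 * ‖Δ‖) • Δ = 0) (x : E) :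
    ‖f (x + Δ)‖ ≤ (L + M) / 2 * ‖Δ‖ ^ 2 + ‖f x - g‖ + ‖f' x - H‖ * ‖Δ‖ := by
  have hsplit : f (x + Δ) =
      (f (x + Δ) - f x - f' x Δ) + (f x - g) + (f' x - H) Δ - (M / 2 * ‖Δ‖) • Δ := by
    rw [eq_neg_of_add_eq_zero_right hstat, sub_apply]
    abel
  calc ‖f (x + Δ)‖ ≤ ‖f (x + Δ) - f x - f' x Δ‖ + ‖f x - g‖ + ‖(f' x - H) Δ‖
        + ‖(M / 2 * ‖Δ‖) • Δ‖ := by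
        conv_lhs => rw [hsplit]
        exact (norm_sub_le _ _).trans (add_le_add_left norm_add₃_le _)
    _ ≤ L / 2 * ‖Δ‖ ^ 2 + ‖f x - g‖ + ‖f' x - H‖ * ‖Δ‖ + M / 2 * ‖Δ‖ * ‖Δ‖ := by
        gcongr
        · exact norm_add_sub_sub_fderiv_le_of_lipschitz hf hlip x Δ
        · exact (f' x - H).le_opNorm Δ
        · rw [norm_smul, Real.norm_of_nonneg (by positivity)]
    _ = _ := by ring

end Normed

section InnerProduct

variable {E : Type*} [NormedAddCommGroup E] [InnerProductSpace ℝ E]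

lemma le_taylor_of_lipschitz_hessian [CompleteSpace E] {f : E → ℝ} {f' : E → E}
    {f'' : E → E →L[ℝ] E} {L : ℝ}
    (hf : ∀ y, HasGradientAt f (f' y) y) (hf' : ∀ y, HasFDerivAt f' (f'' y) y)
    (hlip : ∀ y z, ‖f'' y - f'' z‖ ≤ L * ‖y - z‖) (x Δ : E) :
    f (x + Δ) ≤ f x + ⟪f' x, Δ⟫ + 1 / 2 * ⟪Δ, f'' x Δ⟫ + L / 6 * ‖Δ‖ ^ 3 := by
  have hderiv (t : ℝ) : HasDerivAt
      (fun s : ℝ => f (x + s • Δ) - s * ⟪f' x, Δ⟫ - s ^ 2 / 2 * ⟪Δ, f'' x Δ⟫)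
      ⟪f' (x + t • Δ) - f' x - f'' x (t • Δ), Δ⟫ t := by
    have hline := ((hasDerivAt_id t).smul_const Δ).const_add x
    refine ((((hf _).hasFDerivAt.comp_hasDerivAt t hline).sub
      ((hasDerivAt_id t).mul_const _)).sub
      (((hasDerivAt_pow 2 t).div_const 2).mul_const _)).congr_deriv ?_
    simp [inner_sub_right, real_inner_smul_right, real_inner_comm Δ]
  have hbound (t : ℝ) : HasDerivAt (fun s : ℝ => f x + L / 6 * s ^ 3 * ‖Δ‖ ^ 3)
      (L / 2 * t ^ 2 * ‖Δ‖ ^ 3) t :=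
    ((((hasDerivAt_pow 3 t).const_mul (L / 6)).mul_const (‖Δ‖ ^ 3)).const_add (f x)).congr_deriv
      (by ring)
  have key := image_le_of_deriv_right_le_deriv_boundary
    (fun t _ => (hderiv t).continuousAt.continuousWithinAt) (fun t _ => (hderiv t).hasDerivWithinAt)
    (by simp) (fun t _ => (hbound t).continuousAt.continuousWithinAt)
    (fun t _ => (hbound t).hasDerivWithinAt) (a := 0) (b := 1) (fun t ht => ?_)
    (Set.right_mem_Icc.2 zero_le_one)
  · simp only [one_smul, one_mul, one_pow] at key
    linarith
  calc ⟪f' (x + t • Δ) - f' x - f'' x (t • Δ), Δ⟫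
      ≤ ‖f' (x + t • Δ) - f' x - f'' x (t • Δ)‖ * ‖Δ‖ := real_inner_le_norm _ _
    _ ≤ L / 2 * ‖t • Δ‖ ^ 2 * ‖Δ‖ := by
        gcongr; exact norm_add_sub_sub_fderiv_le_of_lipschitz hf' hlip x _
    _ = L / 2 * t ^ 2 * ‖Δ‖ ^ 3 := by rw [norm_smul, Real.norm_of_nonneg ht.1]; ring

lemma hasFDerivAt_norm_pow_three (x : E) :
    HasFDerivAt (fun v : E => ‖v‖ ^ 3) ((3 * ‖x‖) • innerSL ℝ x) x := by
  have h := hasFDerivAt_norm_rpow x (p := 3) (by norm_num)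
  norm_num at h
  exact_mod_cast h

noncomputable def cubicModel (g : E) (H : E →L[ℝ] E) (M : ℝ) (Δ : E) : ℝ :=
  ⟪g, Δ⟫ + (1 / 2) * ⟪Δ, H Δ⟫ + (M / 6) * ‖Δ‖ ^ 3

variable {g : E} {H : E →L[ℝ] E} {M : ℝ} {Δ : E}

lemma hasFDerivAt_cubicModel (hH : (H : E →ₗ[ℝ] E).IsSymmetric) :
    HasFDerivAt (cubicModel g H M) (innerSL ℝ (g + H Δ + (M / 2 * ‖Δ‖) • Δ)) Δ := by
  have h := (((innerSL ℝ g).hasFDerivAt).add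
    (((hasFDerivAt_id Δ).inner ℝ H.hasFDerivAt).const_mul (1 / 2))).add
    ((hasFDerivAt_norm_pow_three Δ).const_mul (M / 6))
  refine h.congr_fderiv (ContinuousLinearMap.ext fun w => ?_)
  simp [fderivInnerCLM_apply, real_inner_comm (H Δ) w, hH.apply_clm Δ w]
  ring

lemma IsLocalMin.cubicModel_stationary (hH : (H : E →ₗ[ℝ] E).IsSymmetric)
    (hΔ : IsLocalMin (cubicModel g H M) Δ) : g + H Δ + (M / 2 * ‖Δ‖) • Δ = 0 := by
  have h := hΔ.hasFDerivAt_eq_zero (hasFDerivAt_cubicModel hH)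
  simpa only [zero_apply, innerSL_apply_apply, inner_self_eq_zero] using
    congrArg (fun T : E →L[ℝ] ℝ => T (g + H Δ + (M / 2 * ‖Δ‖) • Δ)) h

/-- Comparing `Δ` with `-Δ` gives `⟪g, Δ⟫ ≤ 0`; stationarity then evaluates the model. -/
lemma cubicModel_le_of_forall_le (hH : (H : E →ₗ[ℝ] E).IsSymmetric)
    (hΔ : ∀ Δ', cubicModel g H M Δ ≤ cubicModel g H M Δ') :
    cubicModel g H M Δ ≤ -(M / 12) * ‖Δ‖ ^ 3 := by
  have hg : ⟪g, Δ⟫ ≤ 0 := by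
    have := hΔ (-Δ)
    simp only [cubicModel, inner_neg_left, inner_neg_right, map_neg, norm_neg, neg_neg] at this
    linarith
  have hstat := congrArg (⟪Δ, ·⟫)
    ((IsLocalMin.cubicModel_stationary hH (Filter.Eventually.of_forall hΔ)))
  simp only [inner_add_right, real_inner_smul_right, inner_zero_right,
    real_inner_self_eq_norm_sq, real_inner_comm g] at hstat
  unfold cubicModel
  linarith [show ‖Δ‖ * ‖Δ‖ ^ 2 = ‖Δ‖ ^ 3 by ring]

lemma cubicModel_descent [CompleteSpace E] {f : E → ℝ} {f' : E → E} {f'' : E → E →L[ℝ] E}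
    {L : ℝ} (hf : ∀ y, HasGradientAt f (f' y) y) (hf' : ∀ y, HasFDerivAt f' (f'' y) y)
    (hlip : ∀ y z, ‖f'' y - f'' z‖ ≤ L * ‖y - z‖) (hH : (H : E →ₗ[ℝ] E).IsSymmetric)
    (hΔ : ∀ Δ', cubicModel g H M Δ ≤ cubicModel g H M Δ') (x : E) :
    (M / 4 - L / 6) * ‖Δ‖ ^ 3 ≤
      f x - f (x + Δ) + ‖f' x - g‖ * ‖Δ‖ + 1 / 2 * ‖f'' x - H‖ * ‖Δ‖ ^ 2 := by
  have htaylor := le_taylor_of_lipschitz_hessian hf hf' hlip x Δ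
  have hmodel := cubicModel_le_of_forall_le hH hΔ
  have hg : ⟪f' x, Δ⟫ - ⟪g, Δ⟫ ≤ ‖f' x - g‖ * ‖Δ‖ := by
    rw [← inner_sub_left]; exact real_inner_le_norm _ _
  have hhess : ⟪Δ, f'' x Δ⟫ - ⟪Δ, H Δ⟫ ≤ ‖f'' x - H‖ * ‖Δ‖ ^ 2 := by
    rw [← inner_sub_right, ← ContinuousLinearMap.sub_apply']
    calc _ ≤ ‖Δ‖ * ‖(f'' x - H) Δ‖ := real_inner_le_norm _ _
      _ ≤ ‖Δ‖ * (‖f'' x - H‖ * ‖Δ‖) := by gcongr; exact (f'' x - H).le_opNorm Δ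
      _ = _ := by ring
  unfold cubicModel at hmodel
  linarith

end InnerProduct

theorem stmt_6_general (d : ℕ)
    (F : EuclideanSpace ℝ (Fin d) → ℝ)
    (gradF : EuclideanSpace ℝ (Fin d) → EuclideanSpace ℝ (Fin d))
    (hessF : EuclideanSpace ℝ (Fin d) → EuclideanSpace ℝ (Fin d) →L[ℝ] EuclideanSpace ℝ (Fin d))
    (L₂ M τF α : ℝ) (hL₂ : 0 ≤ L₂) (hM : 3 * M > 2 * L₂ + 8) (hτF : 0 < τF)
    (hα : 1 ≤ α)
    (hgrad : ∀ x, HasGradientAt F (gradF x) x)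
    (hhess : ∀ x, HasFDerivAt gradF (hessF x) x)
    (hlip : ∀ x y, ‖hessF x - hessF y‖ ≤ L₂ * ‖x - y‖)
    (xstar : EuclideanSpace ℝ (Fin d))
    (hGD : ∀ x, F x - F xstar ≤ τF * ‖gradF x‖ ^ α) :
    ∃ C Cg CH : ℝ, 0 < C ∧ 0 < Cg ∧ 0 < CH ∧
      ∀ (x g : EuclideanSpace ℝ (Fin d))
        (H : EuclideanSpace ℝ (Fin d) →L[ℝ] EuclideanSpace ℝ (Fin d)),
        (∀ u w, ⟪H u, w⟫ = ⟪u, H w⟫) →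
        ∀ Δ : EuclideanSpace ℝ (Fin d),
          (∀ Δ' : EuclideanSpace ℝ (Fin d),
            ⟪g, Δ⟫ + (1 / 2) * ⟪Δ, H Δ⟫ + (M / 6) * ‖Δ‖ ^ 3 ≤
              ⟪g, Δ'⟫ + (1 / 2) * ⟪Δ', H Δ'⟫ + (M / 6) * ‖Δ'‖ ^ 3) →
          F (x + Δ) - F xstar ≤
            C * (F x - F (x + Δ)) ^ (2 * α / 3) + Cg * ‖gradF x - g‖ ^ α
              + CH * ‖hessF x - H‖ ^ (2 * α) := by
  have hM0 : 0 ≤ M := by linarith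
  set K := (L₂ + M + 1) / 2 with hK
  have hK0 : 0 < K := by positivity
  set A := τF * (3 * K) ^ α with hA_def
  refine ⟨A * 6 ^ (2 * α / 3), A * (1 + 2 * 24 ^ (2 * α / 3)), A * (1 + 2 * 24 ^ (2 * α / 3)),
    by positivity, by positivity, by positivity, fun x g H hH Δ hΔ => ?_⟩
  have hcube := cube_le_of_cubic_descent (norm_nonneg _) (norm_nonneg _) (norm_nonneg _) hM.le
    (cubicModel_descent hgrad hhess hlip hH hΔ x)
  have hgrad_next :
      ‖gradF (x + Δ)‖ ≤ K * (‖Δ‖ ^ 2 + ‖gradF x - g‖ + ‖hessF x - H‖ ^ 2) := by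
    have := norm_add_le_of_cubic_stationary hhess hlip hM0
      (IsLocalMin.cubicModel_stationary hH (.of_forall hΔ)) x
    rw [hK]
    nlinarith [sq_nonneg (‖hessF x - H‖ - ‖Δ‖), norm_nonneg (gradF x - g)]
  calc F (x + Δ) - F xstar ≤ τF * ‖gradF (x + Δ)‖ ^ α := hGD _
    _ ≤ τF * (K * (‖Δ‖ ^ 2 + ‖gradF x - g‖ + ‖hessF x - H‖ ^ 2)) ^ α := by gcongr
    _ = τF * K ^ α * (‖Δ‖ ^ 2 + ‖gradF x - g‖ + ‖hessF x - H‖ ^ 2) ^ α := by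
        rw [Real.mul_rpow hK0.le (by positivity)]; ring
    _ ≤ τF * K ^ α * (3 ^ α * (6 ^ (2 * α / 3) * (F x - F (x + Δ)) ^ (2 * α / 3) +
          (1 + 2 * 24 ^ (2 * α / 3)) * (‖gradF x - g‖ ^ α + ‖hessF x - H‖ ^ (2 * α)))) := by
        gcongr
        exact rpow_add_add_le_of_cube_le (norm_nonneg _) (norm_nonneg _) (norm_nonneg _)
          (by linarith) hcube
    _ = _ := by rw [hA_def, Real.mul_rpow zero_le_three hK0.le]; ring

theorem stmt_6 (d : ℕ)
    (F : EuclideanSpace ℝ (Fin d) → ℝ)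
    (gradF : EuclideanSpace ℝ (Fin d) → EuclideanSpace ℝ (Fin d))
    (hessF : EuclideanSpace ℝ (Fin d) → EuclideanSpace ℝ (Fin d) →L[ℝ] EuclideanSpace ℝ (Fin d))
    (L₂ M τF α : ℝ) (hL₂ : 0 ≤ L₂) (hM : 3 * M > 2 * L₂ + 8) (hτF : 0 < τF)
    (hα : 1 ≤ α) (hα' : α ≤ 2)
    (hgrad : ∀ x, HasGradientAt F (gradF x) x)
    (hhess : ∀ x, HasFDerivAt gradF (hessF x) x)
    (hlip : ∀ x y, ‖hessF x - hessF y‖ ≤ L₂ * ‖x - y‖)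
    (xstar : EuclideanSpace ℝ (Fin d))
    (hmin : ∀ y, F xstar ≤ F y)
    (hGD : ∀ x, F x - F xstar ≤ τF * ‖gradF x‖ ^ α) :
    ∃ C Cg CH : ℝ, 0 < C ∧ 0 < Cg ∧ 0 < CH ∧
      ∀ (x g : EuclideanSpace ℝ (Fin d))
        (H : EuclideanSpace ℝ (Fin d) →L[ℝ] EuclideanSpace ℝ (Fin d)),
        (∀ u w, ⟪H u, w⟫ = ⟪u, H w⟫) →
        ∀ Δ : EuclideanSpace ℝ (Fin d),
          (∀ Δ' : EuclideanSpace ℝ (Fin d),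
            ⟪g, Δ⟫ + (1 / 2) * ⟪Δ, H Δ⟫ + (M / 6) * ‖Δ‖ ^ 3 ≤
              ⟪g, Δ'⟫ + (1 / 2) * ⟪Δ', H Δ'⟫ + (M / 6) * ‖Δ'‖ ^ 3) →
          F (x + Δ) - F xstar ≤
            C * (F x - F (x + Δ)) ^ (2 * α / 3) + Cg * ‖gradF x - g‖ ^ α
              + CH * ‖hessF x - H‖ ^ (2 * α) :=
  stmt_6_general d F gradF hessF L₂ M τF α hL₂ hM hτF hα hgrad hhess hlip xstar hGD
end

section
/- Let (δ_t) be a sequence of nonnegative reals satisfying δ_{t+1} ≤ (δ_t − δ_{t+1})^{2α/3} for all t, where 1 ≤ α < 3/2. Then as long as δ_t ≥ 1, the sequence decays geometrically: δ_t ≤ (1/2)^t δ_0. -/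
/-! With `p = 2α/3 ∈ (0, 1]` and `d = δ t - δ (t + 1)`, the bound `1 ≤ δ (t + 1) ≤ d ^ p`
forces `|d| ≥ 1` (as `|d ^ p| ≤ |d| ^ p`), hence `d ^ p ≤ |d|`. A negative `d` would then give
`δ t ≤ 0`, so `δ (t + 1) ≤ δ t - δ (t + 1)`: the sequence at least halves at every step. -/

open Real

lemma le_abs_of_le_rpow {p x y : ℝ} (hp : 0 < p) (hp1 : p ≤ 1) (hy : 1 ≤ y)
    (h : y ≤ x ^ p) : y ≤ |x| := by
  have hle : y ≤ |x| ^ p := h.trans ((le_abs_self _).trans (abs_rpow_le_abs_rpow x p))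
  have hx : 1 ≤ |x| :=
    not_lt.1 fun hx => (hy.trans hle).not_gt (rpow_lt_one (abs_nonneg x) hx hp)
  exact hle.trans (rpow_le_self_of_one_le hx hp1)

lemma two_mul_le_of_le_sub_rpow {p a b : ℝ} (hp : 0 < p) (hp1 : p ≤ 1) (ha : 0 < a)
    (hb : 1 ≤ b) (h : b ≤ (a - b) ^ p) : 2 * b ≤ a := by
  have hle := le_abs_of_le_rpow hp hp1 hb h
  rcases abs_cases (a - b) with ⟨habs, -⟩ | ⟨habs, -⟩ <;> linarith

theorem stmt_7_general (α : ℝ) (hα : 1 ≤ α) (hα' : α < 3 / 2) (δ : ℕ → ℝ)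
    (hrec : ∀ t, δ (t + 1) ≤ (δ t - δ (t + 1)) ^ (2 * α / 3)) :
    ∀ t : ℕ, (∀ s ≤ t, 1 ≤ δ s) → δ t ≤ (1 / 2) ^ t * δ 0 := by
  intro t hge
  refine le_geom (by norm_num) t fun s hs => ?_
  have halve : 2 * δ (s + 1) ≤ δ s :=
    two_mul_le_of_le_sub_rpow (by linarith) (by linarith) (by linarith [hge s hs.le])
      (hge (s + 1) hs) (hrec s)
  linarith

theorem stmt_7 (α : ℝ) (hα : 1 ≤ α) (hα' : α < 3 / 2) (δ : ℕ → ℝ)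
    (hnonneg : ∀ t, 0 ≤ δ t)
    (hrec : ∀ t, δ (t + 1) ≤ (δ t - δ (t + 1)) ^ (2 * α / 3)) :
    ∀ t : ℕ, (∀ s ≤ t, 1 ≤ δ s) → δ t ≤ (1 / 2) ^ t * δ 0 :=
  stmt_7_general α hα hα' δ hrec
end

section
/- Let (δ_t) be a sequence of nonnegative reals satisfying δ_{t+1} ≤ (δ_t − δ_{t+1})^{2α/3} with 1 ≤ α < 3/2, and set β = 2α/(3−2α). Then for any t' ≤ t with δ_{t'} < 1, δ_t ≤ β^β · (β δ_{t'}^{−1/β} + (t − t')/2)^{−β}; in particular δ_t = O(t^{−β}). -/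
/-! The recursion forces `δ` to be nonincreasing, and then `δₜ ≥ δₜ₊₁ + δₜ₊₁ ^ (1 + 1/β)`.
While `δ ≤ 1`, Bernoulli's inequality turns this gap into a growth of the potential
`δ ^ (-1/β)` by at least `1/(2β)` per step; summing over `t - t'` steps and inverting the
potential gives the bound. -/

open Real

/-- For `x < 0`, Mathlib defines `x ^ p = exp (log x * p) * cos (p * π)`. -/
lemma rpow_neg_of_neg {x p : ℝ} (hx : x < 0) (hp₁ : 1 / 2 < p) (hp₂ : p < 3 / 2) : x ^ p < 0 := by
  rw [rpow_def_of_neg hx]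
  exact mul_neg_of_pos_of_neg (exp_pos _)
    (cos_neg_of_pi_div_two_lt_of_lt (by nlinarith [pi_pos]) (by nlinarith [pi_pos]))

lemma antitone_of_le_rpow_sub {δ : ℕ → ℝ} {p : ℝ} (hp₁ : 1 / 2 < p) (hp₂ : p < 3 / 2)
    (hδ : ∀ t, 0 ≤ δ t) (hrec : ∀ t, δ (t + 1) ≤ (δ t - δ (t + 1)) ^ p) : Antitone δ :=
  antitone_nat_of_succ_le fun t => by
    by_contra! h
    linarith [hδ (t + 1), hrec t, rpow_neg_of_neg (sub_neg.2 h) hp₁ hp₂]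

lemma add_rpow_inv_le_of_le_rpow_sub {a b p : ℝ} (hp : 0 < p) (ha : 0 ≤ a) (hab : a ≤ b)
    (h : a ≤ (b - a) ^ p) : a + a ^ p⁻¹ ≤ b := by
  have : a ^ p⁻¹ ≤ b - a := calc
    a ^ p⁻¹ ≤ ((b - a) ^ p) ^ p⁻¹ := rpow_le_rpow ha h (inv_nonneg.2 hp.le)
    _ = b - a := rpow_rpow_inv (sub_nonneg.2 hab) hp.ne'
  linarith

lemma one_add_rpow_neg_inv_le {s β : ℝ} (hβ : 1 ≤ β) (hs₀ : 0 ≤ s) (hs₁ : s ≤ 1) :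
    (1 + s) ^ (-β⁻¹) ≤ 1 - s / (2 * β) := by
  have hβ₀ : 0 < β := by linarith
  have hpos : 0 < 1 - s / (2 * β) := by
    rw [sub_pos, div_lt_one (by positivity)]; linarith
  have key : (1 + s)⁻¹ ≤ (1 - s / (2 * β)) ^ β := calc
    (1 + s)⁻¹ ≤ 1 - s / 2 := by
      rw [inv_le_iff_one_le_mul₀ (by positivity)]; nlinarith
    _ = 1 + β * -(s / (2 * β)) := by field_simp; ring
    _ ≤ (1 + -(s / (2 * β))) ^ β := one_add_mul_self_le_rpow_one_add (by linarith) hβ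
    _ = (1 - s / (2 * β)) ^ β := by rw [← sub_eq_add_neg]
  calc (1 + s) ^ (-β⁻¹) = ((1 + s)⁻¹) ^ β⁻¹ := by
        rw [rpow_neg (by positivity), inv_rpow (by positivity)]
    _ ≤ ((1 - s / (2 * β)) ^ β) ^ β⁻¹ := rpow_le_rpow (by positivity) key (by positivity)
    _ = 1 - s / (2 * β) := rpow_rpow_inv hpos.le hβ₀.ne'

lemma rpow_neg_inv_add_le_of_add_rpow_le {x y β : ℝ} (hβ : 1 ≤ β) (hy₀ : 0 < y) (hy₁ : y ≤ 1)
    (hxy : y + y ^ (1 + β⁻¹) ≤ x) : x ^ (-β⁻¹) + (2 * β)⁻¹ ≤ y ^ (-β⁻¹) := by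
  set s := y ^ β⁻¹
  have hs₀ : 0 < s := rpow_pos_of_pos hy₀ _
  have hs₁ : s ≤ 1 := rpow_le_one hy₀.le hy₁ (by positivity)
  have hx : y * (1 + s) ≤ x := by rwa [rpow_add hy₀, rpow_one, ← mul_one_add] at hxy
  have hys : y ^ (-β⁻¹) = s⁻¹ := rpow_neg hy₀.le _
  calc x ^ (-β⁻¹) + (2 * β)⁻¹ ≤ (y * (1 + s)) ^ (-β⁻¹) + (2 * β)⁻¹ :=
        add_le_add_left (rpow_le_rpow_of_nonpos (by positivity) hx
          (neg_nonpos.2 (inv_nonneg.2 (zero_le_one.trans hβ)))) _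
    _ = s⁻¹ * (1 + s) ^ (-β⁻¹) + (2 * β)⁻¹ := by rw [mul_rpow hy₀.le (by positivity), hys]
    _ ≤ s⁻¹ * (1 - s / (2 * β)) + (2 * β)⁻¹ := by
        gcongr; exact one_add_rpow_neg_inv_le hβ hs₀.le hs₁
    _ = y ^ (-β⁻¹) := by rw [hys]; field_simp; ring

lemma antitone_of_add_rpow_le {δ : ℕ → ℝ} {q : ℝ} (hδ : ∀ t, 0 ≤ δ t)
    (hgap : ∀ t, δ (t + 1) + δ (t + 1) ^ q ≤ δ t) : Antitone δ :=
  antitone_nat_of_succ_le fun t => by linarith [hgap t, rpow_nonneg (hδ (t + 1)) q]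

lemma rpow_neg_inv_add_le_of_gap {δ : ℕ → ℝ} {β : ℝ} (hβ : 1 ≤ β) (hδ : ∀ t, 0 ≤ δ t)
    (hgap : ∀ t, δ (t + 1) + δ (t + 1) ^ (1 + β⁻¹) ≤ δ t) {t₀ : ℕ} (h₁ : δ t₀ ≤ 1) (n : ℕ)
    (hn : 0 < δ (t₀ + n)) : δ t₀ ^ (-β⁻¹) + n / (2 * β) ≤ δ (t₀ + n) ^ (-β⁻¹) := by
  have hanti := antitone_of_add_rpow_le hδ hgap
  induction n with
  | zero => simp
  | succ n ih =>
    have hle : δ (t₀ + (n + 1)) ≤ 1 := (hanti (Nat.le_add_right _ _)).trans h₁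
    have hstep := rpow_neg_inv_add_le_of_add_rpow_le hβ hn hle (hgap (t₀ + n))
    have := ih (hn.trans_le (hanti (Nat.le_succ _)))
    have hsplit : ((n + 1 : ℕ) : ℝ) / (2 * β) = n / (2 * β) + (2 * β)⁻¹ := by
      push_cast; ring
    rw [hsplit]
    linarith

lemma le_rpow_neg_of_gap {δ : ℕ → ℝ} {β : ℝ} (hβ : 1 ≤ β) (hδ : ∀ t, 0 ≤ δ t)
    (hgap : ∀ t, δ (t + 1) + δ (t + 1) ^ (1 + β⁻¹) ≤ δ t) {t₀ : ℕ} (h₁ : δ t₀ ≤ 1) (n : ℕ) :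
    δ (t₀ + n) ≤ (δ t₀ ^ (-β⁻¹) + n / (2 * β)) ^ (-β) := by
  have hβ₀ : 0 < β := by linarith
  rcases (hδ (t₀ + n)).eq_or_lt with h0 | hpos
  · rw [← h0]
    exact rpow_nonneg (add_nonneg (rpow_nonneg (hδ t₀) _) (by positivity)) _
  have hpot := rpow_neg_inv_add_le_of_gap hβ hδ hgap h₁ n hpos
  have ht₀ : 0 < δ t₀ := hpos.trans_le (antitone_of_add_rpow_le hδ hgap (Nat.le_add_right _ _))
  calc δ (t₀ + n) = (δ (t₀ + n) ^ (-β⁻¹)) ^ (-β) := by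
        rw [← rpow_mul (hδ _), neg_mul_neg, inv_mul_cancel₀ hβ₀.ne', rpow_one]
    _ ≤ (δ t₀ ^ (-β⁻¹) + n / (2 * β)) ^ (-β) := by
        refine rpow_le_rpow_of_nonpos ?_ hpot (by linarith)
        exact add_pos_of_pos_of_nonneg (rpow_pos_of_pos ht₀ _) (by positivity)

theorem stmt_8 (α : ℝ) (hα : 1 ≤ α) (hα' : α < 3 / 2) (δ : ℕ → ℝ)
    (hnonneg : ∀ t, 0 ≤ δ t)
    (hrec : ∀ t, δ (t + 1) ≤ (δ t - δ (t + 1)) ^ (2 * α / 3))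
    (β : ℝ) (hβ : β = 2 * α / (3 - 2 * α))
    (t' t : ℕ) (htt : t' ≤ t) (hδt' : δ t' < 1) :
    δ t ≤ β ^ β * (β * (δ t') ^ (-1 / β) + ((t : ℝ) - (t' : ℝ)) / 2) ^ (-β) := by
  have hβ₁ : 1 ≤ β := by rw [hβ, le_div_iff₀ (by linarith)]; linarith
  have hβ₀ : 0 < β := by linarith
  have hp : 0 < 2 * α / 3 := by linarith
  have hanti := antitone_of_le_rpow_sub (by linarith) (by linarith) hnonneg hrec
  have hgap : ∀ s, δ (s + 1) + δ (s + 1) ^ (1 + β⁻¹) ≤ δ s := fun s => by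
    have hexp : 1 + β⁻¹ = (2 * α / 3)⁻¹ := by rw [hβ]; field_simp; ring
    rw [hexp]
    exact add_rpow_inv_le_of_le_rpow_sub hp (hnonneg _) (hanti s.le_succ) (hrec s)
  obtain ⟨n, rfl⟩ := Nat.exists_eq_add_of_le htt
  have hz : 0 ≤ δ t' ^ (-β⁻¹) + n / (2 * β) :=
    add_nonneg (rpow_nonneg (hnonneg t') _) (by positivity)
  have hbase : β * δ t' ^ (-1 / β) + (((t' + n : ℕ) : ℝ) - t') / 2
      = β * (δ t' ^ (-β⁻¹) + n / (2 * β)) := by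
    push_cast; rw [neg_div, one_div]; field_simp; ring
  rw [hbase, mul_rpow hβ₀.le hz, ← mul_assoc, ← rpow_add hβ₀, add_neg_cancel, rpow_zero, one_mul]
  exact le_rpow_neg_of_gap hβ₁ hnonneg hgap hδt'.le n
end

section
/- For the softmax tabular policy, the map θ ↦ ∇²_θ log π_θ(a|s) is 6-Lipschitz in operator norm: ‖∇² log π_{θ'}(a|s) − ∇² log π_θ(a|s)‖ ≤ 6‖θ − θ'‖₂ for all θ, θ' and all state-action pairs (s,a). -/
/-- The ℓ²→ℓ² operator norm of a square real matrix. -/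
noncomputable def matOpNorm {n : Type*} [Fintype n] [DecidableEq n] (A : Matrix n n ℝ) : ℝ :=
  ‖LinearMap.toContinuousLinearMap (Matrix.toEuclideanLin A)‖

/-- The softmax tabular policy `π_θ(a|s)` with parameters `θ : S × A → ℝ`. -/
noncomputable def softmaxPolicy' {S A : Type*} [Fintype A] (θ : S × A → ℝ) (s : S) (a : A) : ℝ :=
  Real.exp (θ (s, a)) / ∑ a', Real.exp (θ (s, a'))

/-- The Hessian of `log π_θ(a|s)` with respect to the block `θ_s`:
`π_θ(·|s)π_θ(·|s)ᵀ − Diag(π_θ(·|s))`. -/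
noncomputable def softmaxLogHessian {S A : Type*} [Fintype A] [DecidableEq A]
    (θ : S × A → ℝ) (s : S) : Matrix A A ℝ :=
  Matrix.of fun a' a'' =>
    softmaxPolicy' θ s a' * softmaxPolicy' θ s a''
      - (if a' = a'' then softmaxPolicy' θ s a' else 0)

/-!
The Hessian of `log π_θ(·|s)` is `-J(θ_s)`, where `J(x) = Diag p - p pᵀ` (with `p = softmax x`) is
the Jacobian of softmax. As `‖p‖₂ ≤ 1`, `‖J(x)‖ ≤ ‖p‖ + ‖p‖² ≤ 2`, so softmax is 2-Lipschitz by the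
mean value inequality. Writing `J(x) - J(y) = Diag (p - q) - (p pᵀ - q qᵀ)` and using
`‖p pᵀ - q qᵀ‖ ≤ (‖p‖ + ‖q‖) ‖p - q‖` gives `‖J(x) - J(y)‖ ≤ 3 ‖p - q‖ ≤ 6 ‖x - y‖`.
-/

open scoped Matrix.Norms.L2Operator
open Matrix WithLp

namespace Matrix

variable {𝕜 n : Type*} [RCLike 𝕜] [Fintype n] [DecidableEq n]

theorem l2_opNorm_vecMulVec (x y : EuclideanSpace 𝕜 n) :
    ‖vecMulVec (ofLp x) (star (ofLp y))‖ = ‖x‖ * ‖y‖ := by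
  rw [← InnerProductSpace.symm_toEuclideanLin_rankOne, l2_opNorm_def, LinearEquiv.trans_apply,
    LinearEquiv.apply_symm_apply]
  exact InnerProductSpace.norm_rankOne x y

theorem l2_opNorm_vecMulVec_self_sub_le (u v : EuclideanSpace 𝕜 n) :
    ‖vecMulVec (ofLp u) (star (ofLp u)) - vecMulVec (ofLp v) (star (ofLp v))‖
      ≤ (‖u‖ + ‖v‖) * ‖u - v‖ := by
  have hsplit : vecMulVec (ofLp u) (star (ofLp u)) - vecMulVec (ofLp v) (star (ofLp v))
      = vecMulVec (ofLp u) (star (ofLp (u - v))) + vecMulVec (ofLp (u - v)) (star (ofLp v)) := by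
    ext i j
    simp only [sub_apply, add_apply, vecMulVec_apply, Pi.star_apply, ofLp_sub, Pi.sub_apply,
      star_sub]
    ring
  calc _ ≤ ‖u‖ * ‖u - v‖ + ‖u - v‖ * ‖v‖ := by
        rw [hsplit, ← l2_opNorm_vecMulVec, ← l2_opNorm_vecMulVec]
        exact norm_add_le _ _
    _ = (‖u‖ + ‖v‖) * ‖u - v‖ := by ring

theorem l2_opNorm_diagonal_le (v : EuclideanSpace 𝕜 n) : ‖diagonal (ofLp v)‖ ≤ ‖v‖ := by
  rw [l2_opNorm_diagonal]
  exact (pi_norm_le_iff_of_nonneg (norm_nonneg _)).2 (PiLp.norm_apply_le v)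

end Matrix

theorem EuclideanSpace.norm_toLp_curry_le {𝕜 ι κ : Type*} [RCLike 𝕜] [Fintype ι] [Fintype κ]
    (x : EuclideanSpace 𝕜 (ι × κ)) (i : ι) :
    ‖toLp 2 (Function.curry (ofLp x) i)‖ ≤ ‖x‖ := by
  simp only [EuclideanSpace.norm_eq]
  refine Real.sqrt_le_sqrt ?_
  rw [Fintype.sum_prod_type]
  exact Finset.single_le_sum (f := fun i => ∑ k, ‖x (i, k)‖ ^ 2)
    (fun _ _ => Finset.sum_nonneg fun _ _ => by positivity) (Finset.mem_univ i)

theorem EuclideanSpace.norm_le_one_of_nonneg_of_sum_le_one {n : Type*} [Fintype n]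
    (p : EuclideanSpace ℝ n) (h0 : ∀ i, 0 ≤ p i) (h1 : ∑ i, p i ≤ 1) : ‖p‖ ≤ 1 := by
  have hle : ∀ i, p i ≤ 1 := fun i =>
    (Finset.single_le_sum (fun j _ => h0 j) (Finset.mem_univ i)).trans h1
  rw [← sq_le_one_iff₀ (norm_nonneg _), EuclideanSpace.norm_sq_eq]
  calc ∑ i, ‖p i‖ ^ 2 ≤ ∑ i, p i := Finset.sum_le_sum fun i _ => by
        rw [Real.norm_of_nonneg (h0 i), sq]
        exact mul_le_of_le_one_left (h0 i) (hle i)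
    _ ≤ 1 := h1

theorem matOpNorm_eq_norm {n : Type*} [Fintype n] [DecidableEq n] (M : Matrix n n ℝ) :
    matOpNorm M = ‖M‖ :=
  rfl

section Softmax

variable {n : Type*} [Fintype n]

noncomputable def softmax (x : EuclideanSpace ℝ n) : EuclideanSpace ℝ n :=
  toLp 2 fun i => Real.exp (x i) / ∑ j, Real.exp (x j)

theorem norm_softmax_le_one (x : EuclideanSpace ℝ n) : ‖softmax x‖ ≤ 1 := by
  refine EuclideanSpace.norm_le_one_of_nonneg_of_sum_le_one _
    (fun i => by simp only [softmax]; positivity) ?_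
  simp only [softmax, ← Finset.sum_div]
  exact div_self_le_one _

variable [DecidableEq n]

noncomputable def softmaxJacobian (x : EuclideanSpace ℝ n) : Matrix n n ℝ :=
  diagonal (ofLp (softmax x)) - vecMulVec (ofLp (softmax x)) (ofLp (softmax x))

theorem hasFDerivAt_softmax (x : EuclideanSpace ℝ n) :
    HasFDerivAt softmax (toEuclideanCLM (𝕜 := ℝ) (softmaxJacobian x)) x := by
  rw [← hasFDerivWithinAt_univ, hasFDerivWithinAt_euclidean]
  intro i
  rw [hasFDerivWithinAt_univ]
  -- a coordinate `i` is at hand, so the normaliser is positive even though `n` may be empty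
  have hD : ∑ j, Real.exp (x j) ≠ 0 :=
    (Finset.sum_pos (fun j _ => Real.exp_pos _) ⟨i, Finset.mem_univ i⟩).ne'
  have hexp : ∀ j, HasFDerivAt (fun y : EuclideanSpace ℝ n => Real.exp (y j))
      (Real.exp (x j) • PiLp.proj 2 (fun _ => ℝ) j) x := fun j =>
    (PiLp.hasFDerivAt_apply 2 x j).exp
  refine ((hexp i).mul ((hasFDerivAt_inv hD).comp x (.fun_sum fun j _ => hexp j))).congr_fderiv ?_
  ext h
  simp only [Function.comp_apply, _root_.add_apply, _root_.smul_apply,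
    ContinuousLinearMap.comp_apply, _root_.sum_apply, PiLp.proj_apply, smul_eq_mul, map_sum,
    ContinuousLinearMap.toSpanSingleton_apply, mul_neg,
    Finset.sum_neg_distrib, softmaxJacobian, softmax, div_eq_mul_inv, map_sub,
    ContinuousLinearMap.comp_sub, _root_.sub_apply, ofLp_toEuclideanCLM, mulVec, dotProduct,
    diagonal_apply, ite_mul, zero_mul, Finset.sum_ite_eq, Finset.mem_univ, ↓reduceIte,
    vecMulVec_apply]
  rw [Finset.mul_sum, ← Finset.sum_neg_distrib, sub_eq_neg_add, ← Finset.sum_neg_distrib]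
  congr 1
  · exact Finset.sum_congr rfl fun j _ => by ring
  · ring

theorem norm_softmaxJacobian_le (x : EuclideanSpace ℝ n) : ‖softmaxJacobian x‖ ≤ 2 := by
  have hp := norm_softmax_le_one x
  calc ‖softmaxJacobian x‖
      ≤ ‖diagonal (ofLp (softmax x))‖ + ‖vecMulVec (ofLp (softmax x)) (ofLp (softmax x))‖ :=
        norm_sub_le _ _
    _ ≤ ‖softmax x‖ + ‖softmax x‖ * ‖softmax x‖ := by
        gcongr
        · exact l2_opNorm_diagonal_le _
        · exact (l2_opNorm_vecMulVec (softmax x) (softmax x)).le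
    _ ≤ 2 := by nlinarith [norm_nonneg (softmax x)]

theorem lipschitzWith_softmax : LipschitzWith 2 (softmax : EuclideanSpace ℝ n → _) :=
  lipschitzWith_of_nnnorm_fderiv_le (fun x => (hasFDerivAt_softmax x).differentiableAt)
    fun x => by
      rw [(hasFDerivAt_softmax x).fderiv, ← NNReal.coe_le_coe, coe_nnnorm]
      exact norm_softmaxJacobian_le x

theorem norm_softmaxJacobian_sub_le (x y : EuclideanSpace ℝ n) :
    ‖softmaxJacobian x - softmaxJacobian y‖ ≤ 3 * ‖softmax x - softmax y‖ := by
  set p := softmax x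
  set q := softmax y
  have hsplit : softmaxJacobian x - softmaxJacobian y = diagonal (ofLp (p - q))
      - (vecMulVec (ofLp p) (star (ofLp p)) - vecMulVec (ofLp q) (star (ofLp q))) := by
    rw [ofLp_sub, Pi.sub_def, ← diagonal_sub]
    simp only [softmaxJacobian, star_trivial]
    abel
  calc ‖softmaxJacobian x - softmaxJacobian y‖ ≤ ‖p - q‖ + (‖p‖ + ‖q‖) * ‖p - q‖ := by
        rw [hsplit]
        exact norm_sub_le_of_le (l2_opNorm_diagonal_le _) (l2_opNorm_vecMulVec_self_sub_le p q)
    _ ≤ 3 * ‖p - q‖ := by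
        nlinarith [norm_softmax_le_one x, norm_softmax_le_one y, norm_nonneg (p - q)]

theorem softmaxLogHessian_eq_neg_softmaxJacobian {S A : Type*} [Fintype A] [DecidableEq A]
    (θ : S × A → ℝ) (s : S) :
    softmaxLogHessian θ s = -softmaxJacobian (toLp 2 (Function.curry θ s)) := by
  ext a b
  by_cases hab : a = b <;>
    simp [softmaxLogHessian, softmaxJacobian, softmaxPolicy', softmax, vecMulVec_apply, hab]

end Softmax

theorem stmt_15_general {S A : Type*} [Fintype S] [Fintype A] [DecidableEq A]
    (θ θ' : EuclideanSpace ℝ (S × A)) (s : S) :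
    matOpNorm (softmaxLogHessian θ' s - softmaxLogHessian θ s) ≤ 6 * ‖θ - θ'‖ := by
  set x := toLp 2 (Function.curry (ofLp θ) s)
  set x' := toLp 2 (Function.curry (ofLp θ') s)
  have hslice : ‖x - x'‖ ≤ ‖θ - θ'‖ := EuclideanSpace.norm_toLp_curry_le (θ - θ') s
  calc matOpNorm (softmaxLogHessian θ' s - softmaxLogHessian θ s)
      = ‖softmaxJacobian x - softmaxJacobian x'‖ := by
        rw [softmaxLogHessian_eq_neg_softmaxJacobian, softmaxLogHessian_eq_neg_softmaxJacobian,
          neg_sub_neg, matOpNorm_eq_norm]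
    _ ≤ 3 * ‖softmax x - softmax x'‖ := norm_softmaxJacobian_sub_le x x'
    _ ≤ 3 * (2 * ‖x - x'‖) := by gcongr; exact lipschitzWith_softmax.norm_sub_le x x'
    _ ≤ 6 * ‖θ - θ'‖ := by linarith

theorem stmt_15 {S A : Type*} [Fintype S] [Fintype A] [DecidableEq A]
    (θ θ' : EuclideanSpace ℝ (S × A)) (s : S) (a : A) :
    matOpNorm (softmaxLogHessian θ' s - softmaxLogHessian θ s) ≤ 6 * ‖θ - θ'‖ :=
  stmt_15_general θ θ' s
end

section
/- Suppose J satisfies the weak gradient dominance property J* − J(θ) ≤ ε' + τ_J‖∇J(θ)‖ for all θ, and a sequence (θ_t) satisfies J* − J(θ_{t+1}) − ε' ≤ τ_J‖∇J(θ_{t+1})‖ ≤ C(J(θ_{t+1}) − J(θ_t))^{2/3} + e_t for nonnegative errors e_t. If e_t ≤ P for all t, then the quantity δ_t := (J* − J(θ_t) − P − ε')/C³ satisfies δ_{t+1} ≤ (δ_t − δ_{t+1})^{2/3}, and hence δ_T ≤ 4/(DT)² where D = min{1/2, 2(2^{1/3}−1)δ_0^{−1/2}}; consequently J* − J(θ_T)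 ≤ 4C³/(DT)² + P + ε'. -/
/-!
Weak gradient dominance turns the recursion into `δ (t+1) ≤ (δ t - δ (t+1)) ^ (2/3)`,
i.e. `δ (t+1) + δ (t+1) ^ (3/2) ≤ δ t` while `δ` is positive. Then `u t = δ t ^ (-1/2)` grows
by at least `D / 2` per step: if `δ t ≤ 2 δ (t+1)` the cubic term gives an increment `1/4`,
otherwise `u (t+1) ≥ √2 u t` and `u t ≥ u 0` give an increment `(√2 - 1) u 0`. Hence
`δ T ≤ (D T / 2) ^ (-2)`; and once `δ` is nonpositive it stays so.
-/

open Real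

lemma div_rpow_of_pos_right (x : ℝ) {c : ℝ} (hc : 0 < c) (y : ℝ) :
    (x / c) ^ y = x ^ y / c ^ y := by
  rcases lt_or_ge x 0 with hx | hx
  · rw [rpow_def_of_neg (div_neg_of_neg_of_pos hx hc), rpow_def_of_neg hx, rpow_def_of_pos hc,
      log_div hx.ne hc.ne', sub_mul, exp_sub]
    ring
  · exact div_rpow hx hc.le y

/-- For `x < 0`, Mathlib's `x ^ y` is `exp (log x * y) * cos (y * π)`. -/
lemma rpow_nonpos_of_nonpos {x y : ℝ} (hx : x ≤ 0) (hy₁ : 1 / 2 ≤ y) (hy₂ : y ≤ 3 / 2) :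
    x ^ y ≤ 0 := by
  rcases hx.lt_or_eq with hx | rfl
  · rw [rpow_def_of_neg hx]
    exact mul_nonpos_of_nonneg_of_nonpos (exp_pos _).le
      (cos_nonpos_of_pi_div_two_le_of_le (by nlinarith [pi_pos]) (by nlinarith [pi_pos]))
  · exact (zero_rpow (by linarith)).le

lemma div_pow_three_le_div_pow_three_rpow {x y C : ℝ} (hC : 0 < C)
    (h : x ≤ C * y ^ (2 / 3 : ℝ)) : x / C ^ 3 ≤ (y / C ^ 3) ^ (2 / 3 : ℝ) := by
  have hC3 : (C ^ 3) ^ (2 / 3 : ℝ) = C ^ 2 := by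
    rw [← rpow_natCast, ← rpow_mul hC.le]
    norm_num
  calc x / C ^ 3 ≤ C * y ^ (2 / 3 : ℝ) / C ^ 3 := by gcongr
    _ = (y / C ^ 3) ^ (2 / 3 : ℝ) := by
      rw [div_rpow_of_pos_right _ (by positivity), hC3]
      field_simp

lemma inv_add_le_inv_of_sq_add_cube_le {a b s c : ℝ} (ha : 0 < a) (hb : 0 ≤ b)
    (hab : a ^ 2 + a ^ 3 ≤ b ^ 2) (hbs : b ≤ s) (hc₁ : c ≤ 1 / 4)
    (hc₂ : c ≤ (√2 - 1) / s) : b⁻¹ + c ≤ a⁻¹ := by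
  have hab' : a < b :=
    (pow_lt_pow_iff_left₀ ha.le hb two_ne_zero).1 (by nlinarith [pow_pos ha 3])
  have hb : 0 < b := ha.trans hab'
  rcases le_or_gt (b ^ 2) (2 * a ^ 2) with hsmall | hlarge
  · have : b⁻¹ + 1 / 4 ≤ a⁻¹ := by
      rw [inv_eq_one_div, inv_eq_one_div, div_add_div _ _ hb.ne' (by norm_num),
        div_le_div_iff₀ (by positivity) ha]
      nlinarith [sq_nonneg (b - a), mul_pos ha hb]
    linarith
  · have hsqrt2 : √2 * a < b := by
      rw [← sqrt_sq ha.le, ← sqrt_sq hb.le, ← sqrt_mul zero_le_two]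
      exact sqrt_lt_sqrt (by positivity) hlarge
    have : c ≤ (√2 - 1) / b :=
      hc₂.trans (div_le_div_of_nonneg_left (by simp [one_le_sqrt]) hb hbs)
    have : b⁻¹ + (√2 - 1) / b ≤ a⁻¹ := by
      rw [inv_eq_one_div, inv_eq_one_div, ← add_div, div_le_div_iff₀ hb ha]
      nlinarith
    linarith

lemma nonpos_of_le_rpow_sub {x y : ℝ} (h : y ≤ (x - y) ^ (2 / 3 : ℝ)) (hx : x ≤ 0) :
    y ≤ 0 := by
  by_contra! hy
  linarith [rpow_nonpos_of_nonpos (x := x - y) (y := 2 / 3) (by linarith) (by norm_num)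
    (by norm_num)]

lemma add_sqrt_pow_three_le_of_le_rpow_sub {x y : ℝ} (h : y ≤ (x - y) ^ (2 / 3 : ℝ))
    (hy : 0 < y) : y + √y ^ 3 ≤ x := by
  have hxy : 0 < x - y := by
    by_contra! hxy
    linarith [rpow_nonpos_of_nonpos hxy (y := 2 / 3) (by norm_num) (by norm_num)]
  have hcube : y ^ 3 ≤ (x - y) ^ 2 := by
    calc y ^ 3 ≤ ((x - y) ^ (2 / 3 : ℝ)) ^ 3 := pow_le_pow_left₀ hy.le h 3
      _ = (x - y) ^ 2 := by rw [← rpow_natCast, ← rpow_mul hxy.le]; norm_num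
  have : √y ^ 3 ≤ x - y := by
    rw [← pow_le_pow_iff_left₀ (by positivity) hxy.le two_ne_zero, ← pow_mul, mul_comm,
      pow_mul, sq_sqrt hy.le]
    exact hcube
  linarith

section Recursion

variable {δ : ℕ → ℝ}

lemma inv_sqrt_add_mul_le_of_le_rpow_sub
    (hrec : ∀ t, δ (t + 1) ≤ (δ t - δ (t + 1)) ^ (2 / 3 : ℝ)) (h0 : 0 < δ 0) {c : ℝ}
    (hc : 0 ≤ c) (hc₁ : c ≤ 1 / 4) (hc₂ : c ≤ (√2 - 1) / √(δ 0)) :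
    ∀ T : ℕ, 0 < δ T → (√(δ 0))⁻¹ + T * c ≤ (√(δ T))⁻¹
  | 0, _ => by simp
  | T + 1, hT => by
    have hδT : 0 < δ T := by
      by_contra! h
      exact hT.not_ge (nonpos_of_le_rpow_sub (hrec T) h)
    have ih := inv_sqrt_add_mul_le_of_le_rpow_sub hrec h0 hc hc₁ hc₂ T hδT
    have hbs : √(δ T) ≤ √(δ 0) :=
      (inv_le_inv₀ (sqrt_pos.2 h0) (sqrt_pos.2 hδT)).1
        (by linarith [mul_nonneg T.cast_nonneg hc])
    have hstep := inv_add_le_inv_of_sq_add_cube_le (sqrt_pos.2 hT) (sqrt_nonneg _)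
      (by rw [sq_sqrt hT.le, sq_sqrt hδT.le]
          exact add_sqrt_pow_three_le_of_le_rpow_sub (hrec T) hT)
      hbs hc₁ hc₂
    push_cast
    linarith

lemma le_inv_mul_sq_of_le_rpow_sub
    (hrec : ∀ t, δ (t + 1) ≤ (δ t - δ (t + 1)) ^ (2 / 3 : ℝ)) (h0 : 0 < δ 0) {c : ℝ}
    (hc : 0 < c) (hc₁ : c ≤ 1 / 4) (hc₂ : c ≤ (√2 - 1) / √(δ 0))
    {T : ℕ} (hT : 0 < T) : δ T ≤ ((c * T) ^ 2)⁻¹ := by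
  rcases le_or_gt (δ T) 0 with hδT | hδT
  · exact hδT.trans (by positivity)
  have hsum := inv_sqrt_add_mul_le_of_le_rpow_sub hrec h0 hc.le hc₁ hc₂ T hδT
  have hcT : c * T ≤ (√(δ T))⁻¹ := by
    have : 0 ≤ (√(δ 0))⁻¹ := by positivity
    linarith
  calc δ T = (((√(δ T))⁻¹) ^ 2)⁻¹ := by rw [inv_pow, inv_inv, sq_sqrt hδT.le]
    _ ≤ ((c * T) ^ 2)⁻¹ := by gcongr

theorem le_four_div_sq_of_le_rpow_sub
    (hrec : ∀ t, δ (t + 1) ≤ (δ t - δ (t + 1)) ^ (2 / 3 : ℝ)) (h0 : 0 < δ 0) {T : ℕ}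
    (hT : 0 < T) :
    δ T ≤ 4 /
      (min (1 / 2) (2 * ((2 : ℝ) ^ ((1 : ℝ) / 3) - 1) * δ 0 ^ (-(1 : ℝ) / 2)) * T) ^ 2 := by
  have hcbrt : 1 < (2 : ℝ) ^ ((1 : ℝ) / 3) := one_lt_rpow one_lt_two (by norm_num)
  have hcbrt_le : (2 : ℝ) ^ ((1 : ℝ) / 3) ≤ √2 := by
    rw [sqrt_eq_rpow]
    exact rpow_le_rpow_of_exponent_le one_le_two (by norm_num)
  have hs : 0 < √(δ 0) := sqrt_pos.2 h0
  rw [neg_div, rpow_neg h0.le, ← sqrt_eq_rpow]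
  set B := 2 * ((2 : ℝ) ^ ((1 : ℝ) / 3) - 1) * (√(δ 0))⁻¹ with hB
  have hD : 0 < min (1 / 2) B := lt_min one_half_pos (by rw [hB]; have := sub_pos.2 hcbrt; positivity)
  have hD₁ : min (1 / 2) B / 2 ≤ 1 / 4 := by linarith [min_le_left (1 / 2 : ℝ) B]
  have hD₂ : min (1 / 2) B / 2 ≤ (√2 - 1) / √(δ 0) :=
    calc min (1 / 2) B / 2 ≤ ((2 : ℝ) ^ ((1 : ℝ) / 3) - 1) * (√(δ 0))⁻¹ := by
          linarith [min_le_right (1 / 2 : ℝ) B]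
      _ ≤ (√2 - 1) * (√(δ 0))⁻¹ := by gcongr
      _ = (√2 - 1) / √(δ 0) := (div_eq_mul_inv _ _).symm
  calc δ T ≤ ((min (1 / 2) B / 2 * T) ^ 2)⁻¹ :=
        le_inv_mul_sq_of_le_rpow_sub hrec h0 (half_pos hD) hD₁ hD₂ hT
    _ = 4 / (min (1 / 2) B * T) ^ 2 := by field_simp; ring

end Recursion

theorem stmt_17_general (d : ℕ)
    (J : EuclideanSpace ℝ (Fin d) → ℝ)
    (gradJ : EuclideanSpace ℝ (Fin d) → EuclideanSpace ℝ (Fin d))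
    (Jstar τJ ε' C P : ℝ)
    (hC : 0 < C)
    (hWGD : ∀ θ, Jstar - J θ ≤ ε' + τJ * ‖gradJ θ‖)
    (θseq : ℕ → EuclideanSpace ℝ (Fin d)) (e : ℕ → ℝ)
    (hrec : ∀ t, τJ * ‖gradJ (θseq (t + 1))‖ ≤
      C * (J (θseq (t + 1)) - J (θseq t)) ^ ((2 : ℝ) / 3) + e t)
    (heP : ∀ t, e t ≤ P)
    (δ : ℕ → ℝ) (hδ : ∀ t, δ t = (Jstar - J (θseq t) - P - ε') / C ^ 3)
    (hδ0 : 0 < δ 0)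
    (D : ℝ) (hD : D = min (1 / 2) (2 * ((2 : ℝ) ^ ((1 : ℝ) / 3) - 1) * (δ 0) ^ (-(1 : ℝ) / 2))) :
    (∀ t, δ (t + 1) ≤ (δ t - δ (t + 1)) ^ ((2 : ℝ) / 3)) ∧
    (∀ T : ℕ, 0 < T → δ T ≤ 4 / (D * T) ^ 2) ∧
    (∀ T : ℕ, 0 < T → Jstar - J (θseq T) ≤ 4 * C ^ 3 / (D * T) ^ 2 + P + ε') := by
  have hδrec : ∀ t, δ (t + 1) ≤ (δ t - δ (t + 1)) ^ ((2 : ℝ) / 3) := fun t => by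
    have hdiff : δ t - δ (t + 1) = (J (θseq (t + 1)) - J (θseq t)) / C ^ 3 := by
      rw [hδ, hδ]; ring
    rw [hdiff, hδ]
    exact div_pow_three_le_div_pow_three_rpow hC
      (by linarith [hWGD (θseq (t + 1)), hrec t, heP t])
  have hrate : ∀ T : ℕ, 0 < T → δ T ≤ 4 / (D * T) ^ 2 := fun T hT =>
    hD ▸ le_four_div_sq_of_le_rpow_sub hδrec hδ0 hT
  refine ⟨hδrec, hrate, fun T hT => ?_⟩
  have h := hrate T hT
  rw [hδ, div_le_iff₀ (by positivity)] at h
  linarith [show 4 / (D * T) ^ 2 * C ^ 3 = 4 * C ^ 3 / (D * T) ^ 2 by ring]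

theorem stmt_17 (d : ℕ)
    (J : EuclideanSpace ℝ (Fin d) → ℝ)
    (gradJ : EuclideanSpace ℝ (Fin d) → EuclideanSpace ℝ (Fin d))
    (hgrad : ∀ θ, HasGradientAt J (gradJ θ) θ)
    (Jstar τJ ε' C P : ℝ)
    (hub : ∀ θ, J θ ≤ Jstar)
    (hτJ : 0 < τJ) (hε' : 0 ≤ ε') (hC : 0 < C) (hP : 0 ≤ P)
    (hWGD : ∀ θ, Jstar - J θ ≤ ε' + τJ * ‖gradJ θ‖)
    (θseq : ℕ → EuclideanSpace ℝ (Fin d)) (e : ℕ → ℝ) (he : ∀ t, 0 ≤ e t)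
    (hrec : ∀ t, τJ * ‖gradJ (θseq (t + 1))‖ ≤
      C * (J (θseq (t + 1)) - J (θseq t)) ^ ((2 : ℝ) / 3) + e t)
    (heP : ∀ t, e t ≤ P)
    (δ : ℕ → ℝ) (hδ : ∀ t, δ t = (Jstar - J (θseq t) - P - ε') / C ^ 3)
    (hδ0 : 0 < δ 0)
    (D : ℝ) (hD : D = min (1 / 2) (2 * ((2 : ℝ) ^ ((1 : ℝ) / 3) - 1) * (δ 0) ^ (-(1 : ℝ) / 2))) :
    (∀ t, δ (t + 1) ≤ (δ t - δ (t + 1)) ^ ((2 : ℝ) / 3)) ∧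
    (∀ T : ℕ, 0 < T → δ T ≤ 4 / (D * T) ^ 2) ∧
    (∀ T : ℕ, 0 < T → Jstar - J (θseq T) ≤ 4 * C ^ 3 / (D * T) ^ 2 + P + ε') :=
  stmt_17_general d J gradJ Jstar τJ ε' C P hC hWGD θseq e hrec heP δ hδ hδ0 D hD
end
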